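/- Let M ≥ 2 be an even integer, let S̃^(0) ∈ ℝ^{M×M} be the matrix obtained from the modified DST matrix S by replacing its row of index 1 with the zero row, and let v ∈ ℝ^M have entries v_n = (1/√M)·(−1)^n. Then S̃^(0) v = 0 and ‖v‖₂ = 1; that is, v is a unit vector in the null space of S̃^(0). -/
import Mathlib

noncomputable def modDstMat (M : ℕ) : Matrix (Fin M) (Fin M) ℝ :=
  Matrix.of fun k n =>
    if (k : ℕ) = 0 then Real.sqrt (1 / M)
    else Real.sqrt (2 / M) * Real.sin (Real.pi / M * (k : ℕ) * ((n : ℕ) + 1 / 2))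

lemma tele (θ : ℝ) (M : ℕ) :
    (∑ n ∈ Finset.range M, (-1:ℝ)^n * Real.sin (θ*(n+1/2))) * (2 * Real.cos (θ/2))
      = -((-1:ℝ)^M * Real.sin (θ*M)) := by
  rw [Finset.sum_mul]
  calc ∑ n ∈ Finset.range M, (-1:ℝ)^n * Real.sin (θ*(n+1/2)) * (2 * Real.cos (θ/2))
      = ∑ n ∈ Finset.range M, ((fun n : ℕ => -((-1:ℝ)^n * Real.sin (θ*n))) (n+1)
          - (fun n : ℕ => -((-1:ℝ)^n * Real.sin (θ*n))) n) := by
        refine Finset.sum_congr rfl fun n _ => ?_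
        have key : 2 * Real.sin (θ*((n:ℝ)+1/2)) * Real.cos (θ/2)
            = Real.sin (θ*((n:ℝ)+1)) + Real.sin (θ*(n:ℝ)) := by
          have h1 : θ*((n:ℝ)+1) = θ*((n:ℝ)+1/2) + θ/2 := by ring
          have h2 : θ*(n:ℝ) = θ*((n:ℝ)+1/2) - θ/2 := by ring
          rw [h1, h2, Real.sin_add, Real.sin_sub]
          ring
        simp only
        push_cast
        linear_combination ((-1:ℝ)^n) * key
    _ = -((-1:ℝ)^M * Real.sin (θ*M)) := by
        rw [Finset.sum_range_sub (fun n : ℕ => -((-1:ℝ)^n * Real.sin (θ*n)))]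
        simp

lemma alt_sum_zero {M : ℕ} (hEven : Even M) :
    ∑ n ∈ Finset.range M, (-1:ℝ)^n = 0 := by
  rw [geom_sum_eq (by norm_num), hEven.neg_one_pow]
  norm_num

lemma sin_row_sum_zero {M k : ℕ} (hk1 : 1 ≤ k) (hkM : k < M) :
    ∑ n ∈ Finset.range M, (-1:ℝ)^n * Real.sin (Real.pi / M * k * (n + 1/2)) = 0 := by
  have hM0 : 0 < M := lt_of_le_of_lt (Nat.zero_le k) hkM
  have hM : (0:ℝ) < M := by exact_mod_cast hM0
  set θ : ℝ := Real.pi / M * k with hθ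
  have hcos : 0 < Real.cos (θ/2) := by
    apply Real.cos_pos_of_mem_Ioo
    constructor
    · have : 0 ≤ θ := by positivity
      linarith [Real.pi_pos]
    · have : θ/2 < Real.pi/2 := by
        rw [hθ]
        rw [div_lt_div_iff₀ (by norm_num) (by norm_num)]
        have hk' : (k:ℝ) < M := by exact_mod_cast hkM
        calc Real.pi / M * k * 2 < Real.pi / M * M * 2 := by
              apply mul_lt_mul_of_pos_right
              apply mul_lt_mul_of_pos_left hk' (by positivity)
              norm_num
          _ = Real.pi * 2 := by field_simp
      exact this
  have h := tele θ M
  have hsin : Real.sin (θ * M) = 0 := by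
    have : θ * M = k * Real.pi := by
      rw [hθ]; field_simp
    rw [this, Real.sin_nat_mul_pi]
  rw [hsin] at h
  simp only [mul_zero, neg_zero] at h
  have h2 : (2 * Real.cos (θ/2)) ≠ 0 := by positivity
  have := mul_eq_zero.mp h
  tauto

/-- Section V-A: the alternating vector `v_n = (1/√M)·(−1)ⁿ` is a unit vector in the
null space of `S̃^(0)` (the modified DST with row 1 replaced by the zero row). -/
theorem modDst_null_vector (M : ℕ) (hM : 2 ≤ M) (hEven : Even M) :
    ∀ v : Fin M → ℝ, v = (fun n : Fin M => 1 / Real.sqrt M * (-1 : ℝ) ^ (n : ℕ)) →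
      ((modDstMat M).updateRow ⟨1, by omega⟩ 0).mulVec v = 0 ∧
      Real.sqrt (∑ n, v n ^ 2) = 1 := by
  intro v hv
  subst hv
  have hMpos : (0:ℝ) < M := by positivity
  have hsM : Real.sqrt M ≠ 0 := by positivity
  constructor
  · funext j
    simp only [Matrix.mulVec, dotProduct, Pi.zero_apply]
    by_cases hj : j = (⟨1, by omega⟩ : Fin M)
    · subst hj
      simp [Matrix.updateRow_self]
    · rw [Finset.sum_congr rfl (fun n _ => by rw [Matrix.updateRow_ne hj])]
      by_cases hj0 : (j:ℕ) = 0
      · simp only [modDstMat, Matrix.of_apply, hj0, if_true]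
        rw [Fin.sum_univ_eq_sum_range (fun n => Real.sqrt (1/(M:ℝ)) * (1 / Real.sqrt M * (-1:ℝ)^n))]
        calc ∑ n ∈ Finset.range M, Real.sqrt (1/(M:ℝ)) * (1 / Real.sqrt M * (-1:ℝ)^n)
            = (Real.sqrt (1/(M:ℝ)) / Real.sqrt M) * ∑ n ∈ Finset.range M, (-1:ℝ)^n := by
              rw [Finset.mul_sum]; exact Finset.sum_congr rfl fun n _ => by ring
          _ = 0 := by rw [alt_sum_zero hEven, mul_zero]
      · simp only [modDstMat, Matrix.of_apply, hj0, if_false]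
        have hk1 : 1 ≤ (j:ℕ) := Nat.one_le_iff_ne_zero.mpr hj0
        have hrow := sin_row_sum_zero hk1 j.isLt
        rw [Fin.sum_univ_eq_sum_range
          (fun n => Real.sqrt (2/M) * Real.sin (Real.pi / M * j * (n + 1/2)) * (1 / Real.sqrt M * (-1:ℝ)^n))]
        calc ∑ n ∈ Finset.range M, Real.sqrt (2/M) * Real.sin (Real.pi / M * j * (n + 1/2)) * (1 / Real.sqrt M * (-1:ℝ)^n)
            = (Real.sqrt (2/M) / Real.sqrt M) * ∑ n ∈ Finset.range M, (-1:ℝ)^n * Real.sin (Real.pi / M * j * (n + 1/2)) := by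
              rw [Finset.mul_sum]; exact Finset.sum_congr rfl fun n _ => by ring
          _ = 0 := by rw [hrow, mul_zero]
  · have hv2 : ∀ n : Fin M, (1 / Real.sqrt M * (-1:ℝ)^(n:ℕ))^2 = 1/M := by
      intro n
      have h1 : ((-1:ℝ)^(n:ℕ))^2 = 1 := by
        rw [← pow_mul, mul_comm, pow_mul]; norm_num
      rw [mul_pow, h1, mul_one, div_pow, one_pow, Real.sq_sqrt hMpos.le]
    rw [Finset.sum_congr rfl (fun n _ => hv2 n)]
    simp only [Finset.sum_const, Finset.card_univ, Fintype.card_fin, nsmul_eq_mul]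
    rw [mul_one_div, div_self (ne_of_gt hMpos), Real.sqrt_one]
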